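/- arXiv:1903.08497 — 2 statements merged into one kernel-verified Lean document; each statement's English description precedes it below -/
import Mathlib

section
/- Let A be a symmetric n×n real matrix, b ∈ ℝⁿ, Δ > 0, and f(x) = (1/2)xᵀAx − bᵀx. A point x̂ with ‖x̂‖ ≤ Δ is a global minimizer of f over the closed ball {x : ‖x‖ ≤ Δ} if and only if there exists a scalar μ* such that: (a) (A + μ*I)x̂ = b; (b) A + μ*I is positive semidefinite; and (c) either ‖x̂‖ ≤ Δ and μ* = 0, or ‖x̂‖ = Δ and μ* ≥ 0. -/
open scoped RealInnerProductSpace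
open Filter Topology Metric

/-! Write `g = A x̂ - b`. The expansion `f (x̂ + d) = f x̂ + ⟪g, d⟫ + ½ ⟪d, A d⟫` is exact, and when
`(A + μ I) x̂ = b` it reads
`f x - f x̂ = ½ ⟪(A + μ I)(x - x̂), x - x̂⟫ + (μ / 2) (‖x̂‖² - ‖x‖²)`,
which gives sufficiency at once. Conversely, one-sided first-order conditions along directions
pointing into the ball give `g = 0` at an interior minimizer and, on the sphere, `g = -μ x̂` with
`μ ≥ 0`, since `g` pairs nonnegatively with every `d` such that `⟪x̂, d⟫ < 0`. For the second-order
condition, a line through `x̂` that is not tangent to the sphere meets it again (at the reflection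
of `x̂` across `d^⊥`), where the penalty term vanishes; so the quadratic form of `A + μ I` is
nonnegative off the tangent hyperplane, hence everywhere by continuity. -/

lemma nonneg_of_eventually_nonneg_quadratic {a b c : ℝ}
    (h : ∀ᶠ t in 𝓝[>] 0, 0 ≤ a + b * t + c * t ^ 2) : 0 ≤ a := by
  have hcont : Continuous fun t : ℝ => a + b * t + c * t ^ 2 := by fun_prop
  exact ge_of_tendsto (by simpa using (hcont.tendsto 0).mono_left nhdsWithin_le_nhds) h

section InnerProductSpace

variable {F : Type*} [NormedAddCommGroup F] [InnerProductSpace ℝ F]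

lemma eventually_norm_add_smul_le_of_norm_lt {x : F} {Δ : ℝ} (hx : ‖x‖ < Δ) (d : F) :
    ∀ᶠ t in 𝓝[>] (0 : ℝ), ‖x + t • d‖ ≤ Δ := by
  have hcont : Continuous fun t : ℝ => x + t • d := by fun_prop
  have hlim : Tendsto (fun t : ℝ => x + t • d) (𝓝[>] 0) (𝓝 x) := by
    simpa using (hcont.tendsto 0).mono_left nhdsWithin_le_nhds
  filter_upwards [hlim.eventually (isOpen_ball.mem_nhds (mem_ball_zero_iff.2 hx))] with t ht
  exact (mem_ball_zero_iff.1 ht).le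

lemma eventually_norm_add_smul_le_of_inner_neg {x d : F} (hd : ⟪x, d⟫ < 0) :
    ∀ᶠ t in 𝓝[>] (0 : ℝ), ‖x + t • d‖ ≤ ‖x‖ := by
  have hcont : Continuous fun t : ℝ => 2 * ⟪x, d⟫ + t * ‖d‖ ^ 2 := by fun_prop
  have hlim :
      Tendsto (fun t : ℝ => 2 * ⟪x, d⟫ + t * ‖d‖ ^ 2) (𝓝[>] 0) (𝓝 (2 * ⟪x, d⟫)) := by
    simpa using (hcont.tendsto 0).mono_left nhdsWithin_le_nhds
  filter_upwards [hlim.eventually_lt_const (by linarith), self_mem_nhdsWithin]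
    with t hneg (ht : 0 < t)
  rw [← sq_le_sq₀ (norm_nonneg _) (norm_nonneg _), norm_add_sq_real, norm_smul,
    real_inner_smul_right, Real.norm_eq_abs, mul_pow, sq_abs]
  nlinarith

lemma norm_add_smul_eq_of_ne_zero (x : F) {d : F} (hd : d ≠ 0) :
    ‖x + (-2 * ⟪x, d⟫ / ‖d‖ ^ 2) • d‖ = ‖x‖ := by
  have hd2 : ‖d‖ ^ 2 ≠ 0 := by positivity
  rw [← sq_eq_sq₀ (norm_nonneg _) (norm_nonneg _), norm_add_sq_real, norm_smul,
    real_inner_smul_right, Real.norm_eq_abs, mul_pow, sq_abs]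
  field_simp
  ring

lemma exists_nonneg_add_smul_eq_zero {g v : F} (hv : v ≠ 0)
    (h : ∀ d, ⟪v, d⟫ < 0 → 0 ≤ ⟪g, d⟫) :
    ∃ μ : ℝ, 0 ≤ μ ∧ g + μ • v = 0 := by
  have hv2 : 0 < ‖v‖ ^ 2 := by positivity
  set μ := -⟪g, v⟫ / ‖v‖ ^ 2
  have hμv : μ * ‖v‖ ^ 2 = -⟪g, v⟫ := div_mul_cancel₀ _ hv2.ne'
  refine ⟨μ, ?_, ?_⟩
  · have := h (-v) (by rw [inner_neg_right, real_inner_self_eq_norm_sq]; linarith)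
    rw [inner_neg_right] at this
    nlinarith
  set w := g + μ • v
  have hvw : ⟪v, w⟫ = 0 := by
    rw [inner_add_right, real_inner_smul_right, real_inner_self_eq_norm_sq, real_inner_comm]
    linarith
  have hgw : ⟪g, w⟫ = ‖w‖ ^ 2 := by
    have hgwv : g = w - μ • v := (add_sub_cancel_right g (μ • v)).symm
    rw [hgwv, inner_sub_left, real_inner_smul_left, hvw, real_inner_self_eq_norm_sq]
    ring
  -- Testing against the inward directions `-w - t • v` gives `‖w‖² ≤ t μ ‖v‖²` for `t > 0`.
  have hw : 0 ≤ -‖w‖ ^ 2 := by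
    refine nonneg_of_eventually_nonneg_quadratic (b := μ * ‖v‖ ^ 2) (c := 0) ?_
    filter_upwards [self_mem_nhdsWithin] with t (ht : 0 < t)
    have := h (-w - t • v) (by
      rw [inner_sub_right, inner_neg_right, hvw, real_inner_smul_right,
        real_inner_self_eq_norm_sq]
      nlinarith)
    rw [inner_sub_right, inner_neg_right, hgw, real_inner_smul_right] at this
    nlinarith
  exact norm_eq_zero.1 (by nlinarith [sq_nonneg ‖w‖])

lemma inner_map_self_nonneg_of_inner_neg {S : F →ₗ[ℝ] F} {v : F} (hv : v ≠ 0)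
    (h : ∀ d, ⟪v, d⟫ < 0 → 0 ≤ ⟪S d, d⟫) (d : F) : 0 ≤ ⟪S d, d⟫ := by
  wlog hd : ⟪v, d⟫ ≤ 0 generalizing d
  · simpa using this (-d) (by rw [inner_neg_right]; linarith)
  refine nonneg_of_eventually_nonneg_quadratic
    (b := -(⟪S d, v⟫ + ⟪S v, d⟫)) (c := ⟪S v, v⟫) ?_
  filter_upwards [self_mem_nhdsWithin] with t (ht : 0 < t)
  have hneg : ⟪v, d - t • v⟫ < 0 := by
    have := norm_pos_iff.2 hv
    rw [inner_sub_right, real_inner_smul_right, real_inner_self_eq_norm_sq]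
    nlinarith [mul_pos ht (pow_pos this 2)]
  have := h _ hneg
  simp only [map_sub, map_smul, inner_sub_left, inner_sub_right, real_inner_smul_left,
    real_inner_smul_right] at this
  linarith

noncomputable def quadraticObjective (T : F →ₗ[ℝ] F) (b x : F) : ℝ :=
  1 / 2 * ⟪x, T x⟫ - ⟪b, x⟫

variable {T : F →ₗ[ℝ] F} {b x d : F} {μ Δ : ℝ}

lemma quadraticObjective_add (hT : T.IsSymmetric) (x d : F) :
    quadraticObjective T b (x + d) =
      quadraticObjective T b x + ⟪T x - b, d⟫ + 1 / 2 * ⟪d, T d⟫ := by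
  simp only [quadraticObjective, map_add, inner_add_left, inner_add_right, inner_sub_left]
  rw [← hT x d, real_inner_comm d (T x)]
  ring

lemma quadraticObjective_add_of_apply_eq (hT : T.IsSymmetric) (hx : (T + μ • 1) x = b)
    (d : F) :
    quadraticObjective T b (x + d) = quadraticObjective T b x + 1 / 2 * ⟪(T + μ • 1) d, d⟫ +
      μ / 2 * (‖x‖ ^ 2 - ‖x + d‖ ^ 2) := by
  have hg : T x - b = -(μ • x) := by rw [← hx]; simp
  rw [quadraticObjective_add hT, hg, norm_add_sq_real]
  simp only [LinearMap.add_apply, LinearMap.smul_apply, Module.End.one_apply, inner_add_left,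
    inner_neg_left, real_inner_smul_left, real_inner_self_eq_norm_sq, real_inner_comm d (T d)]
  ring

lemma inner_sub_nonneg_of_isMinOn (hT : T.IsSymmetric) {s : Set F}
    (hmin : IsMinOn (quadraticObjective T b) s x)
    (hd : ∀ᶠ t in 𝓝[>] (0 : ℝ), x + t • d ∈ s) :
    0 ≤ ⟪T x - b, d⟫ := by
  refine nonneg_of_eventually_nonneg_quadratic (b := 1 / 2 * ⟪d, T d⟫) (c := 0) ?_
  filter_upwards [hd, self_mem_nhdsWithin] with t hts (ht : 0 < t)
  have hle : quadraticObjective T b x ≤ quadraticObjective T b (x + t • d) := hmin hts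
  rw [quadraticObjective_add hT, map_smul, real_inner_smul_left, real_inner_smul_right,
    real_inner_smul_right] at hle
  exact (mul_nonneg_iff_of_pos_left ht).1 (by nlinarith)

lemma inner_map_self_nonneg_of_isMinOn (hT : T.IsSymmetric) {s : Set F}
    (hmin : IsMinOn (quadraticObjective T b) s x) (hx : (T + μ • 1) x = b) {t : ℝ}
    (ht : t ≠ 0) (hts : x + t • d ∈ s) (hμ : μ = 0 ∨ ‖x + t • d‖ = ‖x‖) :
    0 ≤ ⟪(T + μ • 1) d, d⟫ := by
  have hle : quadraticObjective T b x ≤ quadraticObjective T b (x + t • d) := hmin hts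
  have hpen : μ / 2 * (‖x‖ ^ 2 - ‖x + t • d‖ ^ 2) = 0 := by
    rcases hμ with rfl | hnorm
    · simp
    · simp [hnorm]
  rw [quadraticObjective_add_of_apply_eq hT hx, hpen, map_smul, real_inner_smul_left,
    real_inner_smul_right] at hle
  exact (mul_nonneg_iff_of_pos_left (by positivity : 0 < t ^ 2)).1 (by nlinarith)

lemma apply_eq_and_inner_nonneg_of_isMinOn_of_norm_lt (hT : T.IsSymmetric)
    (hmin : IsMinOn (quadraticObjective T b) (closedBall 0 Δ) x) (hx : ‖x‖ < Δ) :
    T x = b ∧ ∀ d, 0 ≤ ⟪T d, d⟫ := by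
  have hball (d : F) : ∀ᶠ t in 𝓝[>] (0 : ℝ), x + t • d ∈ closedBall 0 Δ :=
    (eventually_norm_add_smul_le_of_norm_lt hx d).mono fun _ => mem_closedBall_zero_iff.2
  have hg : T x - b = 0 := by
    have := inner_sub_nonneg_of_isMinOn hT hmin (hball (-(T x - b)))
    rw [inner_neg_right, real_inner_self_eq_norm_sq] at this
    exact norm_eq_zero.1 (by nlinarith [sq_nonneg ‖T x - b‖])
  have hTx : (T + (0 : ℝ) • 1) x = b := by simpa [sub_eq_zero] using hg
  refine ⟨by simpa using hTx, fun d => ?_⟩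
  obtain ⟨t, hts, ht⟩ := ((hball d).and self_mem_nhdsWithin).exists
  simpa using inner_map_self_nonneg_of_isMinOn hT hmin hTx (ne_of_gt ht) hts (Or.inl rfl)

lemma exists_apply_eq_and_inner_nonneg_of_isMinOn_of_norm_eq (hT : T.IsSymmetric)
    (hmin : IsMinOn (quadraticObjective T b) (closedBall 0 Δ) x) (hΔ : 0 < Δ)
    (hx : ‖x‖ = Δ) :
    ∃ μ : ℝ, 0 ≤ μ ∧ (T + μ • 1) x = b ∧ ∀ d, 0 ≤ ⟪(T + μ • 1) d, d⟫ := by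
  have hx0 : x ≠ 0 := norm_pos_iff.1 (hx ▸ hΔ)
  obtain ⟨μ, hμ, hg⟩ := exists_nonneg_add_smul_eq_zero hx0 fun d hd =>
    inner_sub_nonneg_of_isMinOn hT hmin <| (eventually_norm_add_smul_le_of_inner_neg hd).mono
      fun _ ht => mem_closedBall_zero_iff.2 (hx ▸ ht)
  have hSx : (T + μ • 1) x = b := by
    rw [← sub_eq_zero, ← hg]
    simp only [LinearMap.add_apply, LinearMap.smul_apply, Module.End.one_apply]
    abel
  refine ⟨μ, hμ, hSx, inner_map_self_nonneg_of_inner_neg hx0 fun d hd => ?_⟩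
  have hd0 : d ≠ 0 := by
    rintro rfl
    simp at hd
  have ht : -2 * ⟪x, d⟫ / ‖d‖ ^ 2 ≠ 0 := div_ne_zero (by linarith) (by positivity)
  have hnorm := norm_add_smul_eq_of_ne_zero x hd0
  exact inner_map_self_nonneg_of_isMinOn hT hmin hSx ht
    (mem_closedBall_zero_iff.2 (hnorm.trans hx).le) (Or.inr hnorm)

lemma isMinOn_quadraticObjective_of_apply_eq (hT : T.IsSymmetric) (hx : (T + μ • 1) x = b)
    (hS : ∀ d, 0 ≤ ⟪(T + μ • 1) d, d⟫) (hμ : μ = 0 ∨ ‖x‖ = Δ ∧ 0 ≤ μ) :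
    IsMinOn (quadraticObjective T b) (closedBall 0 Δ) x := by
  intro y hy
  have hy : ‖y‖ ≤ Δ := mem_closedBall_zero_iff.1 hy
  have hexp := quadraticObjective_add_of_apply_eq hT hx (y - x)
  rw [add_sub_cancel] at hexp
  have hpen : 0 ≤ μ / 2 * (‖x‖ ^ 2 - ‖y‖ ^ 2) := by
    rcases hμ with rfl | ⟨rfl, hμ⟩
    · simp
    · exact mul_nonneg (by positivity) (by nlinarith [norm_nonneg y])
  show quadraticObjective T b x ≤ quadraticObjective T b y
  nlinarith [hS (y - x)]

theorem isMinOn_quadraticObjective_closedBall_iff (hT : T.IsSymmetric) (hΔ : 0 < Δ)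
    (hx : ‖x‖ ≤ Δ) :
    IsMinOn (quadraticObjective T b) (closedBall 0 Δ) x ↔
      ∃ μ : ℝ, (T + μ • 1) x = b ∧ (T + μ • 1).IsPositive ∧
        ((‖x‖ ≤ Δ ∧ μ = 0) ∨ (‖x‖ = Δ ∧ 0 ≤ μ)) := by
  constructor
  · intro hmin
    rcases hx.lt_or_eq with hlt | heq
    · obtain ⟨hTx, hTpos⟩ := apply_eq_and_inner_nonneg_of_isMinOn_of_norm_lt hT hmin hlt
      exact ⟨0, by simpa using hTx, by simpa [LinearMap.IsPositive] using ⟨hT, hTpos⟩,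
        Or.inl ⟨hx, rfl⟩⟩
    · obtain ⟨μ, hμ, hSx, hSpos⟩ :=
        exists_apply_eq_and_inner_nonneg_of_isMinOn_of_norm_eq hT hmin hΔ heq
      exact ⟨μ, hSx, ⟨hT.add (LinearMap.IsSymmetric.one.smul rfl), by simpa using hSpos⟩,
        Or.inr ⟨heq, hμ⟩⟩
  · rintro ⟨μ, hSx, hSpos, hμ⟩
    exact isMinOn_quadraticObjective_of_apply_eq hT hSx
      (fun d => by simpa using hSpos.re_inner_nonneg_left d) (hμ.imp And.right id)

end InnerProductSpace

/-- the classical characterization of global minimizers of the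
trust-region subproblem `min_{‖x‖ ≤ Δ} (1/2)xᵀAx − bᵀx`. -/
theorem trust_region_subproblem_optimality {n : ℕ}
    (A : Matrix (Fin n) (Fin n) ℝ) (hA : A.IsSymm)
    (b : EuclideanSpace ℝ (Fin n)) (Δ : ℝ) (hΔ : 0 < Δ)
    (f : EuclideanSpace ℝ (Fin n) → ℝ)
    (hf : ∀ x, f x = (1 / 2) * ⟪x, Matrix.toEuclideanLin A x⟫ - ⟪b, x⟫)
    (xhat : EuclideanSpace ℝ (Fin n)) (hxhat : ‖xhat‖ ≤ Δ) :
    (∀ x : EuclideanSpace ℝ (Fin n), ‖x‖ ≤ Δ → f xhat ≤ f x) ↔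
      ∃ μ : ℝ,
        Matrix.toEuclideanLin (A + μ • 1) xhat = b ∧
        (A + μ • 1).PosSemidef ∧
        ((‖xhat‖ ≤ Δ ∧ μ = 0) ∨ (‖xhat‖ = Δ ∧ 0 ≤ μ)) := by
  have hT : (Matrix.toEuclideanLin A).IsSymmetric := Matrix.isSymmetric_toEuclideanLin_iff.2 hA
  have hshift (μ : ℝ) :
      Matrix.toEuclideanLin (A + μ • 1) = Matrix.toEuclideanLin A + μ • 1 := by
    ext x i
    simp
  have key := isMinOn_quadraticObjective_closedBall_iff hT hΔ hxhat (b := b)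
  simp only [isMinOn_iff, mem_closedBall_zero_iff] at key
  obtain rfl : f = quadraticObjective (Matrix.toEuclideanLin A) b := funext hf
  simpa only [hshift, ← Matrix.isPositive_toEuclideanLin_iff] using key
end

section
/- Let A be a symmetric positive semidefinite n×n real matrix with smallest and largest eigenvalues λ₁ and λₙ, let b ∈ ℝⁿ, Δ > 0, and f(x) = (1/2)xᵀAx − bᵀx. Suppose x* and μ* satisfy μ* > 0, (A + μ*I)x* = b, and ‖x*‖ = Δ (so x* is the global minimizer of f over the ball {x : ‖x‖ ≤ Δ}). Let ζ = √((λₙ + μ*)/(λ₁ + μ*)). For k ≥ 1, if x_k minimizes f over the set {x ∈ span{b, Ab, …, A^{k−1}b} : ‖x‖ ≤ Δ}, then f(x_k) − f(x*) ≤ 12 ((ζ − 1)/(ζ + 1))^k (f(0) − f(x*)). -/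
/-!
For every polynomial `p` with `p 0 = 1` and `deg p ≤ k`, the vector `y = x⋆ - p(A + μ⋆) x⋆` lies
in the `k`-th Krylov subspace, because `b = (A + μ⋆) x⋆` and `1 - p` is divisible by `X`. If `p`
takes values `rᵢ = p(λᵢ + μ⋆) ∈ [0, 1]` on the spectrum of `A + μ⋆`, then `y` is feasible, and in
an eigenbasis of `A` (with `cᵢ` the coordinates of `x⋆`)
`f y - f x⋆ = ∑ (λᵢ / 2 · rᵢ² + μ⋆ rᵢ) cᵢ²` while `f 0 - f x⋆ = ∑ (λᵢ / 2 + μ⋆) cᵢ²`,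
so the ratio is at most `max rᵢ`. A Chebyshev polynomial rescaled to `[λ₁ + μ⋆, λₙ + μ⋆]` and
normalized at `0`, shifted up by its sup norm there to become nonnegative, has
`max rᵢ ≤ 4 ((ζ - 1) / (ζ + 1)) ^ k`.
-/

open scoped RealInnerProductSpace
open Polynomial Real

theorem Real.cosh_log_add_one_div_sub_one {ζ : ℝ} (hζ : 1 < ζ) :
    cosh (log ((ζ + 1) / (ζ - 1))) = (ζ ^ 2 + 1) / (ζ ^ 2 - 1) := by
  have h1 : 0 < ζ - 1 := by linarith
  have h2 : 0 < ζ ^ 2 - 1 := by nlinarith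
  rw [cosh_log (by positivity), inv_div]
  field_simp
  ring

theorem Polynomial.exists_abs_eval_le_on_Icc {a b : ℝ} (ha : 0 < a) (hab : a < b) (k : ℕ) :
    ∃ q : ℝ[X], q.natDegree ≤ k ∧ q.eval 0 = 1 ∧ ∀ t ∈ Set.Icc a b,
      |q.eval t| ≤ min 1 (2 * ((√(b / a) - 1) / (√(b / a) + 1)) ^ k) := by
  set ζ := √(b / a)
  have hζ : 1 < ζ := Real.lt_sqrt zero_le_one |>.mpr (by rwa [one_pow, one_lt_div ha])
  have hζsq : ζ ^ 2 = b / a := Real.sq_sqrt (div_nonneg (by linarith) ha.le)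
  have hba : 0 < b - a := by linarith
  set s := (ζ + 1) / (ζ - 1)
  have hs : 0 < s := div_pos (by linarith) (by linarith)
  have hx₀ : (b + a) / (b - a) = cosh (log s) := by
    rw [cosh_log_add_one_div_sub_one hζ, hζsq]
    field_simp
  set D := (Chebyshev.T ℝ k).eval ((b + a) / (b - a))
  have hD : D = cosh (k * log s) := by
    simp only [D, hx₀, Chebyshev.T_real_cosh, Int.cast_natCast]
  have hD_one : 1 ≤ D := hD ▸ one_le_cosh _
  have hD_pow : s ^ k / 2 ≤ D := by
    rw [hD, cosh_eq, ← log_pow, exp_log (by positivity)]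
    linarith [exp_pos (-log (s ^ k))]
  set L : ℝ[X] := C (-(2 / (b - a))) * X + C ((b + a) / (b - a))
  refine ⟨(Chebyshev.T ℝ k).comp L * C D⁻¹, ?_, ?_, fun t ht => ?_⟩
  · calc _ ≤ ((Chebyshev.T ℝ k).comp L).natDegree := natDegree_mul_C_le _ _
      _ ≤ (Chebyshev.T ℝ k).natDegree * L.natDegree := natDegree_comp_le
      _ ≤ k * 1 := by
        rw [Chebyshev.natDegree_T]
        exact Nat.mul_le_mul (by simp) natDegree_linear_le
      _ = k := mul_one k
  · have : D ≠ 0 := by positivity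
    simp [L, D, this]
  · have hLt : |L.eval t| ≤ 1 := by
      have : L.eval t = (b + a - 2 * t) / (b - a) := by simp [L]; ring
      rw [this, abs_div, abs_of_pos hba, div_le_one hba, abs_le]
      constructor <;> linarith [ht.1, ht.2]
    have hinv : (ζ - 1) / (ζ + 1) = s⁻¹ := (inv_div _ _).symm
    calc |((Chebyshev.T ℝ k).comp L * C D⁻¹).eval t|
        = |(Chebyshev.T ℝ k).eval (L.eval t)| * D⁻¹ := by
          simp [abs_mul, abs_of_pos (show 0 < D by positivity)]
      _ ≤ 1 * D⁻¹ := by gcongr; exact Chebyshev.abs_eval_T_real_le_one _ hLt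
      _ ≤ min 1 (2 * ((ζ - 1) / (ζ + 1)) ^ k) := by
        rw [one_mul, hinv, inv_pow, le_min_iff]
        constructor
        · exact inv_le_one_of_one_le₀ hD_one
        · rw [← div_eq_mul_inv, le_div_iff₀ (by positivity)]
          rw [inv_mul_le_iff₀ (by positivity)]; linarith

theorem Polynomial.exists_eval_nonneg_le_on_Icc {a b : ℝ} (ha : 0 < a) (hab : a ≤ b) (k : ℕ) :
    ∃ p : ℝ[X], p.natDegree ≤ k ∧ p.eval 0 = 1 ∧ ∀ t ∈ Set.Icc a b,
      0 ≤ p.eval t ∧ p.eval t ≤ 1 ∧ p.eval t ≤ 4 * ((√(b / a) - 1) / (√(b / a) + 1)) ^ k := by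
  rcases hab.eq_or_lt with rfl | hab
  · refine ⟨(C (-a⁻¹) * X + C 1) ^ k,
      (natDegree_pow_le_of_le k natDegree_linear_le).trans_eq (mul_one k), by simp, fun t ht => ?_⟩
    have ht : t = a := le_antisymm ht.2 ht.1
    have hzero : (C (-a⁻¹) * X + C 1).eval a = 0 := by simp [ha.ne']
    simp only [ht, eval_pow, hzero, div_self ha.ne', sqrt_one, sub_self, zero_div]
    rcases k.eq_zero_or_pos with rfl | hk
    · norm_num
    · simp [zero_pow hk.ne']
  · obtain ⟨q, hqdeg, hq0, hq⟩ := exists_abs_eval_le_on_Icc ha hab k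
    set ε := min 1 (2 * ((√(b / a) - 1) / (√(b / a) + 1)) ^ k)
    have hε : 0 ≤ ε := (abs_nonneg _).trans (hq a ⟨le_rfl, hab.le⟩)
    refine ⟨(q + C ε) * C (1 + ε)⁻¹, ?_, ?_, fun t ht => ?_⟩
    · refine (natDegree_mul_C_le _ _).trans ?_
      exact (natDegree_add_le _ _).trans (max_le hqdeg (by simp))
    · have : 1 + ε ≠ 0 := by positivity
      simp [hq0, this]
    · obtain ⟨hlo, hhi⟩ := abs_le.mp (hq t ht)
      have hε1 : ε ≤ 1 := min_le_left _ _
      have hερ : ε ≤ 2 * ((√(b / a) - 1) / (√(b / a) + 1)) ^ k := min_le_right _ _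
      simp only [eval_mul, eval_add, eval_C, ← div_eq_mul_inv]
      refine ⟨div_nonneg (by linarith) (by positivity),
        (div_le_one (by positivity)).mpr (by linarith), ?_⟩
      rw [div_le_iff₀ (by positivity)]
      nlinarith

theorem Polynomial.exists_X_mul_eq_one_sub {R : Type*} [CommRing R] [Nontrivial R] {p : R[X]}
    {k : ℕ} (hp0 : p.eval 0 = 1) (hpk : p.natDegree ≤ k) : ∃ P ∈ degreeLT R k, X * P = 1 - p := by
  obtain ⟨P, hP⟩ : X ∣ 1 - p := by
    rw [X_dvd_iff, coeff_sub, coeff_one_zero, coeff_zero_eq_eval_zero, hp0, sub_self]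
  refine ⟨P, ?_, hP.symm⟩
  rcases eq_or_ne P 0 with rfl | hP0
  · exact Submodule.zero_mem _
  have : (X * P).natDegree ≤ k := hP ▸ (natDegree_sub_le _ _).trans (by simpa using hpk)
  rw [natDegree_X_mul hP0] at this
  rw [mem_degreeLT, ← natDegree_lt_iff_degree_lt hP0]
  exact_mod_cast this

theorem Module.End.aeval_apply_mem_span_pow_apply {R M : Type*} [CommRing R] [AddCommGroup M]
    [Module R M] (T : Module.End R M) (v : M) {k : ℕ} {q : R[X]} (hq : q ∈ degreeLT R k) :
    aeval T q v ∈ Submodule.span R ((fun j => (T ^ j) v) '' Set.Iio k) := by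
  classical
  rw [degreeLT_eq_span_X_pow] at hq
  induction hq using Submodule.span_induction with
  | mem q hq =>
    obtain ⟨j, hj, rfl⟩ := Finset.mem_image.mp hq
    exact Submodule.subset_span ⟨j, Finset.mem_range.mp hj, by simp⟩
  | zero => simp
  | add q r _ _ hq hr => simpa using add_mem hq hr
  | smul c q _ hq => simpa using Submodule.smul_mem _ c hq

theorem LinearMap.IsPositive.nonneg_of_apply_eq_smul {E : Type*} [NormedAddCommGroup E]
    [InnerProductSpace ℝ E] {T : E →ₗ[ℝ] E} (hT : T.IsPositive) {v : E} (hv0 : v ≠ 0) {c : ℝ}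
    (hv : T v = c • v) : 0 ≤ c := by
  have h := hT.inner_nonneg_right v
  rw [hv, real_inner_smul_right, real_inner_self_eq_norm_sq] at h
  exact nonneg_of_mul_nonneg_left h (by positivity)

section Eigenbasis

variable {ι E : Type*} [Fintype ι] [NormedAddCommGroup E] [InnerProductSpace ℝ E]
  {u : OrthonormalBasis ι ℝ E} {T : E →ₗ[ℝ] E} {ev : ι → ℝ}

theorem OrthonormalBasis.inner_aeval_apply_of_eigen (hT : ∀ i, T (u i) = ev i • u i)
    (q : ℝ[X]) (x : E) (i : ι) : ⟪u i, aeval T q x⟫ = q.eval (ev i) * ⟪u i, x⟫ := by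
  have heig : ∀ j, aeval T q (u j) = q.eval (ev j) • u j := fun j =>
    Module.End.aeval_apply_of_hasEigenvector
      (Module.End.hasEigenvector_iff.mpr ⟨Module.End.mem_eigenspace_iff.mpr (hT j),
        u.orthonormal.ne_zero j⟩)
  conv_lhs => rw [← u.sum_repr' x]
  simp only [map_sum, map_smul, heig, smul_smul]
  rw [u.orthonormal.inner_right_fintype, mul_comm]

theorem OrthonormalBasis.inner_apply_of_eigen (hT : ∀ i, T (u i) = ev i • u i) (x : E) (i : ι) :
    ⟪u i, T x⟫ = ev i * ⟪u i, x⟫ := by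
  simpa using u.inner_aeval_apply_of_eigen hT X x i

theorem OrthonormalBasis.le_eigen_of_forall_le_inner (hT : ∀ i, T (u i) = ev i • u i) {c : ℝ}
    (h : ∀ x, c * ‖x‖ ^ 2 ≤ ⟪x, T x⟫) (i : ι) : c ≤ ev i := by
  simpa [u.inner_apply_of_eigen hT, real_inner_self_eq_norm_sq] using h (u i)

theorem OrthonormalBasis.eigen_le_of_forall_inner_le (hT : ∀ i, T (u i) = ev i • u i) {c : ℝ}
    (h : ∀ x, ⟪x, T x⟫ ≤ c * ‖x‖ ^ 2) (i : ι) : ev i ≤ c := by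
  simpa [u.inner_apply_of_eigen hT, real_inner_self_eq_norm_sq] using h (u i)

theorem OrthonormalBasis.exists_mem_span_pow_inner_eq (hT : ∀ i, T (u i) = ev i • u i)
    {b xstar : E} {μ : ℝ} (hb : b = T xstar + μ • xstar) {p : ℝ[X]} {k : ℕ}
    (hp0 : p.eval 0 = 1) (hpk : p.natDegree ≤ k) :
    ∃ y ∈ Submodule.span ℝ ((fun j => (T ^ j) b) '' Set.Iio k),
      ∀ i, ⟪u i, y⟫ = (1 - p.eval (ev i + μ)) * ⟪u i, xstar⟫ := by
  obtain ⟨P, hPk, hP⟩ := exists_X_mul_eq_one_sub hp0 hpk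
  -- `aeval T (taylor μ P) b = P(T + μ) (T + μ) x⋆ = x⋆ - p(T + μ) x⋆`
  refine ⟨aeval T (taylor μ P) b, Module.End.aeval_apply_mem_span_pow_apply T b
    (by rwa [mem_degreeLT, degree_taylor, ← mem_degreeLT]), fun i => ?_⟩
  rw [u.inner_aeval_apply_of_eigen hT, hb, inner_add_right, inner_smul_right,
    u.inner_apply_of_eigen hT, taylor_eval]
  have hPi := congrArg (eval (ev i + μ)) hP
  simp only [eval_mul, eval_X, eval_sub, eval_one] at hPi
  linear_combination ⟪u i, xstar⟫ * hPi

theorem OrthonormalBasis.norm_le_of_inner_eq_mul {x y : E} {s : ι → ℝ} (hs : ∀ i, |s i| ≤ 1)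
    (hy : ∀ i, ⟪u i, y⟫ = s i * ⟪u i, x⟫) : ‖y‖ ≤ ‖x‖ := by
  refine (sq_le_sq₀ (norm_nonneg _) (norm_nonneg _)).mp ?_
  rw [← u.sum_sq_inner_right, ← u.sum_sq_inner_right]
  refine Finset.sum_le_sum fun i _ => ?_
  rw [hy, mul_pow]
  exact mul_le_of_le_one_left (sq_nonneg _) ((sq_le_one_iff_abs_le_one _).mpr (hs i))

theorem OrthonormalBasis.quadratic_eq_sum (hT : ∀ i, T (u i) = ev i • u i) {f : E → ℝ}
    {b xstar : E} {μ : ℝ} (hb : b = T xstar + μ • xstar)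
    (hf : ∀ x, f x = (1 / 2) * ⟪x, T x⟫ - ⟪b, x⟫) (x : E) :
    f x = ∑ i, (ev i / 2 * ⟪u i, x⟫ ^ 2 - (ev i + μ) * ⟪u i, xstar⟫ * ⟪u i, x⟫) := by
  rw [hf, ← u.sum_inner_mul_inner x, ← u.sum_inner_mul_inner b, Finset.mul_sum,
    ← Finset.sum_sub_distrib]
  refine Finset.sum_congr rfl fun i _ => ?_
  rw [real_inner_comm (u i) b, hb, inner_add_right, inner_smul_right, u.inner_apply_of_eigen hT,
    u.inner_apply_of_eigen hT, real_inner_comm (u i) x]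
  ring

theorem OrthonormalBasis.quadratic_le_quadratic_zero (hT : ∀ i, T (u i) = ev i • u i)
    (hev : ∀ i, 0 ≤ ev i) {f : E → ℝ} {b xstar : E} {μ : ℝ} (hμ : 0 ≤ μ)
    (hb : b = T xstar + μ • xstar) (hf : ∀ x, f x = (1 / 2) * ⟪x, T x⟫ - ⟪b, x⟫) :
    f xstar ≤ f 0 := by
  rw [u.quadratic_eq_sum hT hb hf, u.quadratic_eq_sum hT hb hf]
  refine Finset.sum_le_sum fun i _ => ?_
  simp only [inner_zero_right]
  nlinarith [hev i, sq_nonneg ⟪u i, xstar⟫]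

theorem OrthonormalBasis.quadratic_sub_le_mul (hT : ∀ i, T (u i) = ev i • u i)
    (hev : ∀ i, 0 ≤ ev i) {f : E → ℝ} {b xstar y : E} {μ ε : ℝ} (hμ : 0 ≤ μ)
    (hb : b = T xstar + μ • xstar) (hf : ∀ x, f x = (1 / 2) * ⟪x, T x⟫ - ⟪b, x⟫)
    {r : ι → ℝ} (hr : ∀ i, 0 ≤ r i ∧ r i ≤ 1 ∧ r i ≤ ε)
    (hy : ∀ i, ⟪u i, y⟫ = (1 - r i) * ⟪u i, xstar⟫) :
    f y - f xstar ≤ ε * (f 0 - f xstar) := by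
  simp only [u.quadratic_eq_sum hT hb hf, hy, inner_zero_right, Finset.mul_sum,
    ← Finset.sum_sub_distrib]
  refine Finset.sum_le_sum fun i _ => ?_
  obtain ⟨hr0, hr1, hrε⟩ := hr i
  have hr2 : r i ^ 2 ≤ ε := by nlinarith
  have hc := sq_nonneg ⟪u i, xstar⟫
  nlinarith [mul_le_mul_of_nonneg_left hr2 (mul_nonneg (hev i) hc),
    mul_le_mul_of_nonneg_left hrε (mul_nonneg hμ hc)]

end Eigenbasis

theorem trust_region_lanczos_linear_rate_general {n : ℕ}
    (A : Matrix (Fin n) (Fin n) ℝ) (hA : A.PosSemidef)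
    (b : EuclideanSpace ℝ (Fin n)) (Δ : ℝ)
    (f : EuclideanSpace ℝ (Fin n) → ℝ)
    (hf : ∀ x, f x = (1 / 2) * ⟪x, Matrix.toEuclideanLin A x⟫ - ⟪b, x⟫)
    -- `λ₁` is the smallest eigenvalue of `A`
    (lam1 : ℝ) (hlam1eig : ∃ v : EuclideanSpace ℝ (Fin n), v ≠ 0 ∧
      Matrix.toEuclideanLin A v = lam1 • v)
    (hlam1lb : ∀ x : EuclideanSpace ℝ (Fin n),
      lam1 * ‖x‖ ^ 2 ≤ ⟪x, Matrix.toEuclideanLin A x⟫)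
    -- `λₙ` is the largest eigenvalue of `A`
    (lamn : ℝ)
    (hlamnub : ∀ x : EuclideanSpace ℝ (Fin n),
      ⟪x, Matrix.toEuclideanLin A x⟫ ≤ lamn * ‖x‖ ^ 2)
    -- the optimizer on the boundary with positive multiplier `μ*`
    (xstar : EuclideanSpace ℝ (Fin n)) (μ : ℝ) (hμ : 0 < μ)
    (hKKT : Matrix.toEuclideanLin (A + μ • 1) xstar = b)
    (hxstar : ‖xstar‖ = Δ)
    (ζ : ℝ) (hζ : ζ = Real.sqrt ((lamn + μ) / (lam1 + μ)))
    (k : ℕ)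
    (xk : EuclideanSpace ℝ (Fin n))
    (hmin : ∀ x ∈ Submodule.span ℝ
        ((fun j : ℕ => Matrix.toEuclideanLin (A ^ j) b) '' Set.Iio k),
      ‖x‖ ≤ Δ → f xk ≤ f x) :
    f xk - f xstar ≤ 12 * ((ζ - 1) / (ζ + 1)) ^ k * (f 0 - f xstar) := by
  set T := Matrix.toEuclideanLin A
  have hT : T.IsPositive := Matrix.isPositive_toEuclideanLin_iff.mpr hA
  set u := hT.isSymmetric.eigenvectorBasis finrank_euclideanSpace_fin
  set ev := hT.isSymmetric.eigenvalues finrank_euclideanSpace_fin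
  have hu : ∀ i, T (u i) = ev i • u i := hT.isSymmetric.apply_eigenvectorBasis _
  obtain ⟨v, hv0, hv⟩ := hlam1eig
  have hlam1 : 0 ≤ lam1 := hT.nonneg_of_apply_eq_smul hv0 hv
  have hlam1n : lam1 ≤ lamn := le_of_mul_le_mul_right ((hlam1lb v).trans (hlamnub v))
    (by positivity)
  have hb : b = T xstar + μ • xstar := by
    rw [← hKKT, map_add, map_smul, Matrix.toLpLin_one]; rfl
  obtain ⟨p, hpdeg, hp0, hp⟩ := exists_eval_nonneg_le_on_Icc
    (by linarith : 0 < lam1 + μ) (by linarith : lam1 + μ ≤ lamn + μ) k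
  rw [← hζ] at hp
  obtain ⟨y, hymem, hy⟩ := u.exists_mem_span_pow_inner_eq hu hb hp0 hpdeg
  have hev : ∀ i, lam1 ≤ ev i := u.le_eigen_of_forall_le_inner hu hlam1lb
  have hr : ∀ i, _ := fun i => hp (ev i + μ)
    ⟨by linarith [hev i], by linarith [u.eigen_le_of_forall_inner_le hu hlamnub i]⟩
  have hynorm : ‖y‖ ≤ Δ := hxstar ▸ u.norm_le_of_inner_eq_mul
    (fun i => abs_le.mpr ⟨by linarith [hr i], by linarith [hr i]⟩) hy
  have hρ : 0 ≤ (ζ - 1) / (ζ + 1) := by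
    have : 1 ≤ ζ := hζ ▸ Real.one_le_sqrt.mpr ((one_le_div (by linarith)).mpr (by linarith))
    exact div_nonneg (by linarith) (by linarith)
  have hf0 := u.quadratic_le_quadratic_zero hu (fun i => hlam1.trans (hev i)) hμ.le hb hf
  have hxk : f xk ≤ f y := hmin y (by simpa only [Matrix.toLpLin_pow] using hymem) hynorm
  calc f xk - f xstar ≤ f y - f xstar := by linarith
    _ ≤ 4 * ((ζ - 1) / (ζ + 1)) ^ k * (f 0 - f xstar) :=
      u.quadratic_sub_le_mul hu (fun i => hlam1.trans (hev i)) hμ.le hb hf hr hy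
    _ ≤ 12 * ((ζ - 1) / (ζ + 1)) ^ k * (f 0 - f xstar) := by gcongr; linarith

/-- linear convergence rate of the trust-region Lanczos method
for a positive semidefinite quadratic, via Chebyshev polynomial analysis. -/
theorem trust_region_lanczos_linear_rate {n : ℕ}
    (A : Matrix (Fin n) (Fin n) ℝ) (hA : A.PosSemidef)
    (b : EuclideanSpace ℝ (Fin n)) (Δ : ℝ) (hΔ : 0 < Δ)
    (f : EuclideanSpace ℝ (Fin n) → ℝ)
    (hf : ∀ x, f x = (1 / 2) * ⟪x, Matrix.toEuclideanLin A x⟫ - ⟪b, x⟫)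
    -- `λ₁` is the smallest eigenvalue of `A`
    (lam1 : ℝ) (hlam1eig : ∃ v : EuclideanSpace ℝ (Fin n), v ≠ 0 ∧
      Matrix.toEuclideanLin A v = lam1 • v)
    (hlam1lb : ∀ x : EuclideanSpace ℝ (Fin n),
      lam1 * ‖x‖ ^ 2 ≤ ⟪x, Matrix.toEuclideanLin A x⟫)
    -- `λₙ` is the largest eigenvalue of `A`
    (lamn : ℝ) (hlamneig : ∃ v : EuclideanSpace ℝ (Fin n), v ≠ 0 ∧
      Matrix.toEuclideanLin A v = lamn • v)
    (hlamnub : ∀ x : EuclideanSpace ℝ (Fin n),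
      ⟪x, Matrix.toEuclideanLin A x⟫ ≤ lamn * ‖x‖ ^ 2)
    -- the optimizer on the boundary with positive multiplier `μ*`
    (xstar : EuclideanSpace ℝ (Fin n)) (μ : ℝ) (hμ : 0 < μ)
    (hKKT : Matrix.toEuclideanLin (A + μ • 1) xstar = b)
    (hxstar : ‖xstar‖ = Δ)
    (ζ : ℝ) (hζ : ζ = Real.sqrt ((lamn + μ) / (lam1 + μ)))
    (k : ℕ) (hk : 1 ≤ k)
    (xk : EuclideanSpace ℝ (Fin n))
    (hmem : xk ∈ Submodule.span ℝ
      ((fun j : ℕ => Matrix.toEuclideanLin (A ^ j) b) '' Set.Iio k))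
    (hfeas : ‖xk‖ ≤ Δ)
    (hmin : ∀ x ∈ Submodule.span ℝ
        ((fun j : ℕ => Matrix.toEuclideanLin (A ^ j) b) '' Set.Iio k),
      ‖x‖ ≤ Δ → f xk ≤ f x) :
    f xk - f xstar ≤ 12 * ((ζ - 1) / (ζ + 1)) ^ k * (f 0 - f xstar) :=
  trust_region_lanczos_linear_rate_general A hA b Δ f hf lam1 hlam1eig hlam1lb lamn hlamnub xstar μ
    hμ hKKT hxstar ζ hζ k xk hmin
end
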